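/- Let n ≥ 1, x_t, x_s, β ∈ ℝⁿ, α ∈ ℝ, ρ_t, ρ_s > 0, σ_t, σ_s > 0, ρ ∈ (−1, 1), and σ_{t,s} = ρσ_tσ_s. Let (U_t, U_s) have the bivariate normal distribution with means x_t'β + ρ_t·α and x_s'β + ρ_s·α, standard deviations σ_t and σ_s, and correlation ρ. Then E[(U_t²U_s − U_s²U_t·(ρ_t/ρ_s) − U_tU_s·(x_t − (ρ_t/ρ_s)x_s)'β + U_t·(σ_s²·(ρ_t/ρ_s) − σ_{t,s}) − U_s·(σ_t² − σ_{t,s}·(ρ_t/ρ_s)))·1{U_t>0, U_s>0}] = 0. -/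

import Mathlib

/-!
The bivariate normal density `f` satisfies Stein's identity `Σ ∇f = -(x - μ) f`. With
`c = ρ_t / ρ_s` the means satisfy `μ_t - c μ_s = (x_t - c x_s)'β`, so the individual effect drops
out and the integrand equals `-A ∂ᵤ(u v f) - B ∂ᵥ(u v f)` with `A = σ_t² - c σ_{t,s}` and
`B = σ_{t,s} - c σ_s²`. Each partial derivative integrates to zero over the positive quadrant:
along the differentiated variable `u v f` vanishes at `0` and, having Gaussian tails, tends to `0`
at `∞`.
-/

open MeasureTheory

noncomputable def binormalPDF (μ₁ μ₂ σ₁ σ₂ ρ u₁ u₂ : ℝ) : ℝ :=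
  (1 / (2 * Real.pi * σ₁ * σ₂ * Real.sqrt (1 - ρ ^ 2))) *
    Real.exp (-(1 / (2 * (1 - ρ ^ 2))) *
      ((u₁ - μ₁) ^ 2 / σ₁ ^ 2 - 2 * ρ * (u₁ - μ₁) * (u₂ - μ₂) / (σ₁ * σ₂)
        + (u₂ - μ₂) ^ 2 / σ₂ ^ 2))

open Real Set Filter Topology

section

variable {E : Type*} [NormedAddCommGroup E] [NormedSpace ℝ E] [CompleteSpace E]

theorem integral_Ioi_eq_zero_of_hasDerivAt {f f' : ℝ → E} {a : ℝ} (ha : f a = 0)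
    (hderiv : ∀ x ∈ Ici a, HasDerivAt f (f' x) x) (hf' : IntegrableOn f' (Ioi a))
    (hf : IntegrableOn f (Ioi a)) : ∫ x in Ioi a, f' x = 0 := by
  have hlim : Tendsto f atTop (𝓝 0) :=
    tendsto_zero_of_hasDerivAt_of_integrableOn_Ioi
      (fun x hx => hderiv x (Ioi_subset_Ici_self hx)) hf' hf
  rw [integral_Ioi_of_hasDerivAt_of_tendsto' hderiv hf' hlim, ha, sub_zero]

theorem setIntegral_Ioi_prod_Ioi_eq_zero_of_hasDerivAt_fst {F F' : ℝ → ℝ → E} {a b : ℝ}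
    (hF₀ : ∀ y, F a y = 0) (hderiv : ∀ x ∈ Ici a, ∀ y, HasDerivAt (F · y) (F' x y) x)
    (hF : IntegrableOn (fun p : ℝ × ℝ => F p.1 p.2) (Ioi a ×ˢ Ioi b))
    (hF' : IntegrableOn (fun p : ℝ × ℝ => F' p.1 p.2) (Ioi a ×ˢ Ioi b)) :
    ∫ p in Ioi a ×ˢ Ioi b, F' p.1 p.2 = 0 := by
  rw [IntegrableOn, Measure.volume_eq_prod, ← Measure.prod_restrict] at hF hF'
  rw [Measure.volume_eq_prod, ← Measure.prod_restrict]
  refine (integral_prod_symm _ hF').trans (integral_eq_zero_of_ae ?_)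
  filter_upwards [hF.prod_left_ae, hF'.prod_left_ae] with y hFy hF'y
  exact integral_Ioi_eq_zero_of_hasDerivAt (hF₀ y) (fun x hx => hderiv x hx y) hF'y hFy

end

theorem integrable_pow_mul_exp_neg_mul_sq {b : ℝ} (hb : 0 < b) (i : ℕ) :
    Integrable fun x : ℝ => x ^ i * exp (-b * x ^ 2) := by
  simpa [rpow_natCast] using
    integrable_rpow_mul_exp_neg_mul_sq hb (s := i) (neg_one_lt_zero.trans_le i.cast_nonneg)

theorem exp_neg_mul_sub_sq_le {a : ℝ} (ha : 0 ≤ a) (x μ : ℝ) :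
    exp (-a * (x - μ) ^ 2) ≤ exp (a * μ ^ 2) * exp (-(a / 2) * x ^ 2) := by
  rw [← exp_add, exp_le_exp]
  nlinarith [mul_nonneg ha (sq_nonneg (x - 2 * μ))]

theorem sq_add_sq_div_le {ρ : ℝ} (hρ : |ρ| < 1) (s t : ℝ) :
    (s ^ 2 + t ^ 2) / (1 + |ρ|) ≤ (s ^ 2 - 2 * ρ * s * t + t ^ 2) / (1 - ρ ^ 2) := by
  have h₁ : 1 - ρ ^ 2 = (1 - |ρ|) * (1 + |ρ|) := by rw [← sq_abs ρ]; ring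
  rw [h₁, div_le_div_iff₀ (by positivity) (mul_pos (by linarith) (by positivity))]
  nlinarith [mul_nonneg (sub_nonneg.2 (le_abs_self ρ)) (sq_nonneg (s + t)),
    mul_nonneg (sub_nonneg.2 (neg_le_abs ρ)) (sq_nonneg (s - t)), abs_nonneg ρ]

section Binormal

variable {μ₁ μ₂ σ₁ σ₂ ρ : ℝ}

theorem binormalPDF_swap (u v : ℝ) :
    binormalPDF μ₂ μ₁ σ₂ σ₁ ρ v u = binormalPDF μ₁ μ₂ σ₁ σ₂ ρ u v := by
  unfold binormalPDF
  ring_nf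

theorem continuous_binormalPDF :
    Continuous fun p : ℝ × ℝ => binormalPDF μ₁ μ₂ σ₁ σ₂ ρ p.1 p.2 := by
  unfold binormalPDF
  fun_prop

theorem exists_norm_binormalPDF_le (hσ₁ : σ₁ ≠ 0) (hσ₂ : σ₂ ≠ 0) (hρ : |ρ| < 1) :
    ∃ K a b : ℝ, 0 < a ∧ 0 < b ∧ ∀ u v,
      ‖binormalPDF μ₁ μ₂ σ₁ σ₂ ρ u v‖ ≤ K * (exp (-a * u ^ 2) * exp (-b * v ^ 2)) := by
  set κ := (1 + |ρ|)⁻¹ / 2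
  set N := 1 / (2 * π * σ₁ * σ₂ * √(1 - ρ ^ 2))
  refine ⟨|N| * (exp (κ / σ₁ ^ 2 * μ₁ ^ 2) * exp (κ / σ₂ ^ 2 * μ₂ ^ 2)),
    κ / σ₁ ^ 2 / 2, κ / σ₂ ^ 2 / 2, by positivity, by positivity, fun u v => ?_⟩
  have hexponent : -(1 / (2 * (1 - ρ ^ 2))) * ((u - μ₁) ^ 2 / σ₁ ^ 2
        - 2 * ρ * (u - μ₁) * (v - μ₂) / (σ₁ * σ₂) + (v - μ₂) ^ 2 / σ₂ ^ 2) ≤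
      -(κ / σ₁ ^ 2) * (u - μ₁) ^ 2 + -(κ / σ₂ ^ 2) * (v - μ₂) ^ 2 := by
    have h := sq_add_sq_div_le hρ ((u - μ₁) / σ₁) ((v - μ₂) / σ₂)
    simp only [div_pow, one_div, mul_inv] at h ⊢
    linear_combination (1 / 2 : ℝ) * h
  unfold binormalPDF
  rw [norm_mul, Real.norm_eq_abs, Real.norm_of_nonneg (exp_pos _).le]
  calc |N| * exp _ ≤ |N| * (exp (-(κ / σ₁ ^ 2) * (u - μ₁) ^ 2) *
        exp (-(κ / σ₂ ^ 2) * (v - μ₂) ^ 2)) := by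
        gcongr
        rwa [← exp_add, exp_le_exp]
    _ ≤ |N| * ((exp (κ / σ₁ ^ 2 * μ₁ ^ 2) * exp (-(κ / σ₁ ^ 2 / 2) * u ^ 2)) *
        (exp (κ / σ₂ ^ 2 * μ₂ ^ 2) * exp (-(κ / σ₂ ^ 2 / 2) * v ^ 2))) := by
        gcongr <;> exact exp_neg_mul_sub_sq_le (by positivity) _ _
    _ = _ := by ring

theorem integrable_pow_mul_pow_mul_binormalPDF (hσ₁ : σ₁ ≠ 0) (hσ₂ : σ₂ ≠ 0) (hρ : |ρ| < 1)
    (i j : ℕ) :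
    Integrable fun p : ℝ × ℝ => p.1 ^ i * p.2 ^ j * binormalPDF μ₁ μ₂ σ₁ σ₂ ρ p.1 p.2 := by
  obtain ⟨K, a, b, ha, hb, hbound⟩ := exists_norm_binormalPDF_le (μ₁ := μ₁) (μ₂ := μ₂) hσ₁ hσ₂ hρ
  have hdom : Integrable fun p : ℝ × ℝ =>
      K * ‖p.1 ^ i * exp (-a * p.1 ^ 2)‖ * ‖p.2 ^ j * exp (-b * p.2 ^ 2)‖ :=
    ((integrable_pow_mul_exp_neg_mul_sq ha i).norm.const_mul K).mul_prod
      (integrable_pow_mul_exp_neg_mul_sq hb j).norm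
  refine hdom.mono' (((continuous_fst.pow i).mul (continuous_snd.pow j)).mul
    continuous_binormalPDF).aestronglyMeasurable ?_
  refine Eventually.of_forall fun p => ?_
  simp only [norm_mul, norm_pow, Real.norm_of_nonneg (exp_pos _).le]
  calc ‖p.1‖ ^ i * ‖p.2‖ ^ j * ‖binormalPDF μ₁ μ₂ σ₁ σ₂ ρ p.1 p.2‖
      ≤ ‖p.1‖ ^ i * ‖p.2‖ ^ j * (K * (exp (-a * p.1 ^ 2) * exp (-b * p.2 ^ 2))) := by
        gcongr
        exact hbound p.1 p.2
    _ = _ := by ring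

noncomputable def binormalPDFDerivFst (μ₁ μ₂ σ₁ σ₂ ρ u v : ℝ) : ℝ :=
  (ρ * (v - μ₂) / (σ₁ * σ₂) - (u - μ₁) / σ₁ ^ 2) / (1 - ρ ^ 2) * binormalPDF μ₁ μ₂ σ₁ σ₂ ρ u v

theorem hasDerivAt_binormalPDF_fst (u v : ℝ) :
    HasDerivAt (binormalPDF μ₁ μ₂ σ₁ σ₂ ρ · v) (binormalPDFDerivFst μ₁ μ₂ σ₁ σ₂ ρ u v) u := by
  have hquad : HasDerivAt (fun x => (x - μ₁) ^ 2 / σ₁ ^ 2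
      - 2 * ρ * (x - μ₁) * (v - μ₂) / (σ₁ * σ₂) + (v - μ₂) ^ 2 / σ₂ ^ 2)
      (2 * (u - μ₁) / σ₁ ^ 2 - 2 * ρ * (v - μ₂) / (σ₁ * σ₂)) u := by
    have h := (hasDerivAt_id' u).sub_const μ₁
    refine (((h.pow 2).div_const (σ₁ ^ 2)).sub (((h.const_mul (2 * ρ)).mul_const (v - μ₂)).div_const
      (σ₁ * σ₂))).add_const ((v - μ₂) ^ 2 / σ₂ ^ 2) |>.congr_deriv ?_
    norm_num
  unfold binormalPDFDerivFst binormalPDF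
  refine ((hquad.const_mul _).exp.const_mul _).congr_deriv ?_
  simp only [one_div, mul_inv]
  ring

theorem covariance_mul_binormalPDFDerivFst (hσ₁ : σ₁ ≠ 0) (hσ₂ : σ₂ ≠ 0) (hρ : ρ ^ 2 ≠ 1)
    (u v : ℝ) :
    σ₁ ^ 2 * binormalPDFDerivFst μ₁ μ₂ σ₁ σ₂ ρ u v
      + ρ * σ₁ * σ₂ * binormalPDFDerivFst μ₂ μ₁ σ₂ σ₁ ρ v u =
      -(u - μ₁) * binormalPDF μ₁ μ₂ σ₁ σ₂ ρ u v := by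
  have hρ' : 1 - ρ ^ 2 ≠ 0 := sub_ne_zero.2 (Ne.symm hρ)
  unfold binormalPDFDerivFst
  rw [binormalPDF_swap]
  field_simp
  ring

noncomputable def binormalMulMulDerivFst (μ₁ μ₂ σ₁ σ₂ ρ u v : ℝ) : ℝ :=
  v * binormalPDF μ₁ μ₂ σ₁ σ₂ ρ u v + u * v * binormalPDFDerivFst μ₁ μ₂ σ₁ σ₂ ρ u v

theorem hasDerivAt_mul_mul_binormalPDF_fst (u v : ℝ) :
    HasDerivAt (fun x => x * v * binormalPDF μ₁ μ₂ σ₁ σ₂ ρ x v)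
      (binormalMulMulDerivFst μ₁ μ₂ σ₁ σ₂ ρ u v) u := by
  refine (((hasDerivAt_id' u).mul_const v).mul (hasDerivAt_binormalPDF_fst u v)).congr_deriv ?_
  simp only [binormalMulMulDerivFst]
  ring

theorem integrable_binormalMulMulDerivFst (hσ₁ : σ₁ ≠ 0) (hσ₂ : σ₂ ≠ 0) (hρ : |ρ| < 1) :
    Integrable fun p : ℝ × ℝ => binormalMulMulDerivFst μ₁ μ₂ σ₁ σ₂ ρ p.1 p.2 := by
  have m := integrable_pow_mul_pow_mul_binormalPDF (μ₁ := μ₁) (μ₂ := μ₂) hσ₁ hσ₂ hρ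
  set c := (1 - ρ ^ 2)⁻¹
  refine ((((m 0 1).add ((m 1 2).const_mul (c * ρ / (σ₁ * σ₂)))).sub
    ((m 2 1).const_mul (c / σ₁ ^ 2))).add
    ((m 1 1).const_mul (c * (μ₁ / σ₁ ^ 2 - ρ * μ₂ / (σ₁ * σ₂))))).congr
    (Eventually.of_forall fun p => ?_)
  simp only [binormalMulMulDerivFst, binormalPDFDerivFst, Pi.add_apply, Pi.sub_apply, c]
  ring

theorem integrable_binormalMulMulDerivFst_swap (hσ₁ : σ₁ ≠ 0) (hσ₂ : σ₂ ≠ 0) (hρ : |ρ| < 1) :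
    Integrable fun p : ℝ × ℝ => binormalMulMulDerivFst μ₁ μ₂ σ₁ σ₂ ρ p.2 p.1 :=
  (integrable_binormalMulMulDerivFst hσ₁ hσ₂ hρ).swap

theorem setIntegral_Ioi_prod_Ioi_binormalMulMulDerivFst (hσ₁ : σ₁ ≠ 0) (hσ₂ : σ₂ ≠ 0)
    (hρ : |ρ| < 1) :
    ∫ p in Ioi (0 : ℝ) ×ˢ Ioi (0 : ℝ), binormalMulMulDerivFst μ₁ μ₂ σ₁ σ₂ ρ p.1 p.2 = 0 :=
  setIntegral_Ioi_prod_Ioi_eq_zero_of_hasDerivAt_fst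
    (F := fun u v => u * v * binormalPDF μ₁ μ₂ σ₁ σ₂ ρ u v)
    (fun _ => by simp) (fun u _ v => hasDerivAt_mul_mul_binormalPDF_fst u v)
    (by simpa using (integrable_pow_mul_pow_mul_binormalPDF hσ₁ hσ₂ hρ 1 1).integrableOn)
    (integrable_binormalMulMulDerivFst hσ₁ hσ₂ hρ).integrableOn

theorem setIntegral_Ioi_prod_Ioi_binormalMulMulDerivFst_swap (hσ₁ : σ₁ ≠ 0) (hσ₂ : σ₂ ≠ 0)
    (hρ : |ρ| < 1) :
    ∫ p in Ioi (0 : ℝ) ×ˢ Ioi (0 : ℝ), binormalMulMulDerivFst μ₁ μ₂ σ₁ σ₂ ρ p.2 p.1 = 0 :=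
  (setIntegral_prod_swap _ _ _).trans (setIntegral_Ioi_prod_Ioi_binormalMulMulDerivFst hσ₁ hσ₂ hρ)

theorem moment_mul_binormalPDF (hσ₁ : σ₁ ≠ 0) (hσ₂ : σ₂ ≠ 0) (hρ : ρ ^ 2 ≠ 1) (c u v : ℝ) :
    (u ^ 2 * v - v ^ 2 * u * c - u * v * (μ₁ - c * μ₂) + u * (σ₂ ^ 2 * c - ρ * σ₁ * σ₂)
        - v * (σ₁ ^ 2 - ρ * σ₁ * σ₂ * c)) * binormalPDF μ₁ μ₂ σ₁ σ₂ ρ u v =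
      -(σ₁ ^ 2 - c * (ρ * σ₁ * σ₂)) * binormalMulMulDerivFst μ₁ μ₂ σ₁ σ₂ ρ u v
        - (ρ * σ₁ * σ₂ - c * σ₂ ^ 2) * binormalMulMulDerivFst μ₂ μ₁ σ₂ σ₁ ρ v u := by
  have h₁ := covariance_mul_binormalPDFDerivFst (μ₁ := μ₁) (μ₂ := μ₂) hσ₁ hσ₂ hρ u v
  have h₂ := covariance_mul_binormalPDFDerivFst (μ₁ := μ₂) (μ₂ := μ₁) hσ₂ hσ₁ hρ v u
  rw [binormalPDF_swap] at h₂
  simp only [binormalMulMulDerivFst, binormalPDF_swap]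
  linear_combination (u * v) * h₁ - (c * u * v) * h₂

end Binormal

theorem panel_tobit_factor_loading_moment_general (n : ℕ) (xt xs β : Fin n → ℝ) (α : ℝ)
    (ρt ρs : ℝ) (hρs : 0 < ρs)
    (σt σs ρ : ℝ) (hσt : 0 < σt) (hσs : 0 < σs) (hρ : ρ ∈ Set.Ioo (-1 : ℝ) 1)
    (σts : ℝ) (hσts : σts = ρ * σt * σs) :
    ∫ p in Set.Ioi (0 : ℝ) ×ˢ Set.Ioi (0 : ℝ),
        (p.1 ^ 2 * p.2 - p.2 ^ 2 * p.1 * (ρt / ρs)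
            - p.1 * p.2 * (∑ i, (xt i - (ρt / ρs) * xs i) * β i)
            + p.1 * (σs ^ 2 * (ρt / ρs) - σts)
            - p.2 * (σt ^ 2 - σts * (ρt / ρs)))
          * binormalPDF (∑ i, xt i * β i + ρt * α) (∑ i, xs i * β i + ρs * α)
              σt σs ρ p.1 p.2 = 0 := by
  subst hσts
  have hρ₁ : |ρ| < 1 := abs_lt.2 hρ
  have hρ₂ : ρ ^ 2 ≠ 1 := by nlinarith [sq_abs ρ, abs_nonneg ρ]
  have hμ : ∑ i, (xt i - ρt / ρs * xs i) * β i =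
      (∑ i, xt i * β i + ρt * α) - ρt / ρs * (∑ i, xs i * β i + ρs * α) := by
    simp only [sub_mul, mul_assoc, Finset.sum_sub_distrib, ← Finset.mul_sum]
    field_simp
    ring
  simp only [hμ, moment_mul_binormalPDF hσt.ne' hσs.ne' hρ₂]
  rw [integral_sub
      ((integrable_binormalMulMulDerivFst hσt.ne' hσs.ne' hρ₁).const_mul _).integrableOn
      ((integrable_binormalMulMulDerivFst_swap hσs.ne' hσt.ne' hρ₁).const_mul _).integrableOn,
    integral_const_mul, integral_const_mul,
    setIntegral_Ioi_prod_Ioi_binormalMulMulDerivFst hσt.ne' hσs.ne' hρ₁,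
    setIntegral_Ioi_prod_Ioi_binormalMulMulDerivFst_swap hσs.ne' hσt.ne' hρ₁]
  simp

/-- Moment condition (Estm_fl) for the factor-loading fixed-effects panel Tobit model:
with `(U_t, U_s)` bivariate normal with means `x_t'β + ρ_t α`, `x_s'β + ρ_s α`, standard
deviations `σ_t, σ_s`, and correlation `ρ` (covariance `σ_{t,s} = ρσ_tσ_s`),
`E[(U_t²U_s − U_s²U_t(ρ_t/ρ_s) − U_tU_s(x_t − (ρ_t/ρ_s)x_s)'β + U_t(σ_s²(ρ_t/ρ_s) − σ_{t,s})
   − U_s(σ_t² − σ_{t,s}(ρ_t/ρ_s)))·1{U_t>0,U_s>0}] = 0`. -/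
theorem panel_tobit_factor_loading_moment (n : ℕ) (hn : 1 ≤ n) (xt xs β : Fin n → ℝ) (α : ℝ)
    (ρt ρs : ℝ) (hρt : 0 < ρt) (hρs : 0 < ρs)
    (σt σs ρ : ℝ) (hσt : 0 < σt) (hσs : 0 < σs) (hρ : ρ ∈ Set.Ioo (-1 : ℝ) 1)
    (σts : ℝ) (hσts : σts = ρ * σt * σs) :
    ∫ p in Set.Ioi (0 : ℝ) ×ˢ Set.Ioi (0 : ℝ),
        (p.1 ^ 2 * p.2 - p.2 ^ 2 * p.1 * (ρt / ρs)
            - p.1 * p.2 * (∑ i, (xt i - (ρt / ρs) * xs i) * β i)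
            + p.1 * (σs ^ 2 * (ρt / ρs) - σts)
            - p.2 * (σt ^ 2 - σts * (ρt / ρs)))
          * binormalPDF (∑ i, xt i * β i + ρt * α) (∑ i, xs i * β i + ρs * α)
              σt σs ρ p.1 p.2 = 0 :=
  panel_tobit_factor_loading_moment_general n xt xs β α ρt ρs hρs σt σs ρ hσt hσs hρ σts hσts
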